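/- arXiv:1612.04261 — 4 statements merged into one kernel-verified Lean document; each statement's English description precedes it below -/
import Mathlib

section
/- Let X be a compact metrizable space and φ : X → X a homeomorphism with exactly two fixed points x⁺ and x⁻ such that every point y ≠ x⁻ converges to x⁺ under forward iteration of φ, every point y ≠ x⁺ converges to x⁻ under backward iteration, x⁺ is locally attracting for φ, and x⁻ is locally attracting for φ⁻¹. Then φ acts with uniform north–south dynamics: for every compact K ⊆ X \ {x⁻} and every open neighborhood U of x⁺ there is N ≥ 1 such that φⁿ(K) ⊆ U for all n ≥ N, and symmetrically for φ⁻¹, K ⊆ X \ {x⁺}, and neighborhoods of x⁻. -/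
open Filter Topology

private lemma uniform_attract_aux {X : Type*} [TopologicalSpace X] [CompactSpace X]
    (f : X → X) (hf : Continuous f) (xp xn : X)
    (hfwd : ∀ y, y ≠ xn → Tendsto (fun n : ℕ => f^[n] y) atTop (𝓝 xp))
    (hattr : ∀ U ∈ 𝓝 xp, ∃ V ∈ 𝓝 xp, V ⊆ U ∧ f '' V ⊆ V) :
    ∀ K : Set X, IsCompact K → xn ∉ K →
      ∀ U ∈ 𝓝 xp, ∃ N : ℕ, 1 ≤ N ∧ ∀ n ≥ N, f^[n] '' K ⊆ U := by
  intro K hK hxn U hU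
  obtain ⟨V, hV, hVU, hinv⟩ := hattr U hU
  have hinv' : ∀ k, ∀ v ∈ V, f^[k] v ∈ V := by
    intro k
    induction k with
    | zero => simp
    | succ k ih =>
      intro v hv
      rw [Function.iterate_succ_apply]
      exact ih _ (hinv ⟨v, hv, rfl⟩)
  have key : ∀ y : K, ∃ N : ℕ, f^[N] (y : X) ∈ interior V := by
    rintro ⟨y, hy⟩
    have hy' : y ≠ xn := fun h => hxn (h ▸ hy)
    exact ((hfwd y hy').eventually
      (isOpen_interior.mem_nhds (mem_interior_iff_mem_nhds.mpr hV))).exists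
  choose N hN using key
  have hopen : ∀ y : K, IsOpen (f^[N y] ⁻¹' interior V) :=
    fun y => isOpen_interior.preimage (hf.iterate _)
  have hcover : K ⊆ ⋃ y : K, f^[N y] ⁻¹' interior V :=
    fun z hz => Set.mem_iUnion.mpr ⟨⟨z, hz⟩, hN _⟩
  obtain ⟨t, ht⟩ := hK.elim_finite_subcover _ hopen hcover
  refine ⟨t.sup N + 1, Nat.le_add_left 1 _, ?_⟩
  rintro n hn _ ⟨z, hz, rfl⟩
  obtain ⟨y, hyt, hzy⟩ := Set.mem_iUnion₂.mp (ht hz)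
  have hNy : N y ≤ n := le_trans (le_trans (Finset.le_sup hyt) (Nat.le_succ _)) hn
  have : f^[n] z = f^[n - N y] (f^[N y] z) := by
    rw [← Function.iterate_add_apply, Nat.sub_add_cancel hNy]
  rw [this]
  exact hVU (hinv' _ _ (interior_subset hzy))

/-- A homeomorphism of a compact metrizable space with exactly two
fixed points `x⁺ ≠ x⁻`, pointwise north–south dynamics, `x⁺` locally attracting for
`φ` and `x⁻` locally attracting for `φ⁻¹`, acts with *uniform* north–south dynamics. -/
theorem pointwise_to_uniform_north_south {X : Type*} [TopologicalSpace X]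
    [CompactSpace X] [TopologicalSpace.MetrizableSpace X]
    (φ : Homeomorph X X) (xp xn : X) (hne : xp ≠ xn)
    (hfixp : φ xp = xp) (hfixn : φ xn = xn)
    (honly : ∀ x, φ x = x → x = xp ∨ x = xn)
    (hfwd : ∀ y, y ≠ xn → Tendsto (fun n : ℕ => φ^[n] y) atTop (𝓝 xp))
    (hbwd : ∀ y, y ≠ xp → Tendsto (fun n : ℕ => (φ.symm)^[n] y) atTop (𝓝 xn))
    (hattr : ∀ U ∈ 𝓝 xp, ∃ V ∈ 𝓝 xp, V ⊆ U ∧ φ '' V ⊆ V ∧ (⋂ n : ℕ, φ^[n] '' V) = {xp})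
    (hrep : ∀ U ∈ 𝓝 xn, ∃ V ∈ 𝓝 xn, V ⊆ U ∧ φ.symm '' V ⊆ V ∧
      (⋂ n : ℕ, (φ.symm)^[n] '' V) = {xn}) :
    (∀ K : Set X, IsCompact K → xn ∉ K →
      ∀ U ∈ 𝓝 xp, ∃ N : ℕ, 1 ≤ N ∧ ∀ n ≥ N, φ^[n] '' K ⊆ U) ∧
    (∀ K : Set X, IsCompact K → xp ∉ K →
      ∀ V ∈ 𝓝 xn, ∃ N : ℕ, 1 ≤ N ∧ ∀ n ≥ N, (φ.symm)^[n] '' K ⊆ V) := by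
  constructor
  · exact uniform_attract_aux φ φ.continuous xp xn hfwd
      (fun U hU => by obtain ⟨V, h1, h2, h3, -⟩ := hattr U hU; exact ⟨V, h1, h2, h3⟩)
  · exact uniform_attract_aux φ.symm φ.symm.continuous xn xp hbwd
      (fun U hU => by obtain ⟨V, h1, h2, h3, -⟩ := hrep U hU; exact ⟨V, h1, h2, h3⟩)
end

section
/- Let T be a simplicial metric tree with a minimal isometric action of a free group F, with trivial edge stabilizers, and let c : T̂ → T be an F-equivariant collapse map from a free simplicial F-tree T̂ (collapsing the subtrees corresponding to vertex stabilizers). If l = {X, X'} is a birecurrent bi-infinite geodesic in T̂ whose two ends are both T-bounded, then the endpoints X, X' map to the same point of T under the boundary extension of c; in particular l is carried by a single vertex stabilizer of T. -/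
/-- Let `c : T̂ → T` be an `F`-equivariant collapse map (no
backtracking, i.e. `BCC(c) = 0`) from a free simplicial `F`-tree `T̂` to a
simplicial `F`-tree `T` with trivial edge stabilizers. If `l` is a birecurrent
bi-infinite geodesic in `T̂` (birecurrence realized by translates of subsegments in
both ends) whose two ends are both `T`-bounded, then the whole image `c(l)` is a
single point `p` of `T`; in particular both endpoints map to the same point of `T`
and `l` is carried by the stabilizer of `p`. -/
theorem collapse_birecurrent_bounded_line_is_vertex {F X Y : Type*} [Group F]
    [MetricSpace X] [MetricSpace Y] [MulAction F X] [MulAction F Y]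
    (hisoX : ∀ g : F, Isometry (fun x : X => g • x))
    (hisoY : ∀ g : F, Isometry (fun y : Y => g • y))
    (hfree : ∀ g : F, g ≠ 1 → ∀ x : X, g • x ≠ x)
    (c : X → Y) (hequiv : ∀ (g : F) (x : X), c (g • x) = g • c x)
    (l : ℤ → X) (hgeo : ∀ m n : ℤ, dist (l m) (l n) = |(m : ℝ) - n|)
    -- `c` is a collapse map: no cancellation along `l`
    (hmono : ∀ m n k : ℤ, m ≤ n → n ≤ k →
      dist (c (l m)) (c (l n)) + dist (c (l n)) (c (l k)) = dist (c (l m)) (c (l k)))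
    -- both ends of `l` are `T`-bounded
    (hbdd : ∃ C : ℝ, ∀ n : ℤ, dist (c (l n)) (c (l 0)) ≤ C)
    -- birecurrence: every finite subpath recurs, via translates, in both ends
    (hbirec : ∀ a b N : ℤ,
      (∃ t ≥ N, ∃ g : F, ∀ j : ℤ, a ≤ j → j ≤ b → l (t + (j - a)) = g • l j) ∧
      (∃ t : ℤ, t + (b - a) ≤ -N ∧ ∃ g : F, ∀ j : ℤ, a ≤ j → j ≤ b →
        l (t + (j - a)) = g • l j)) :
    ∃ p : Y, ∀ n : ℤ, c (l n) = p := by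
  obtain ⟨C, hC⟩ := hbdd
  have hC0 : 0 ≤ C := le_trans dist_nonneg (hC 0)
  -- any two image points are within 2C
  have hdb : ∀ a b : ℤ, dist (c (l a)) (c (l b)) ≤ 2 * C := by
    intro a b
    calc dist (c (l a)) (c (l b)) ≤ dist (c (l a)) (c (l 0)) + dist (c (l 0)) (c (l b)) :=
          dist_triangle _ _ _
      _ ≤ C + C := add_le_add (hC a) (by rw [dist_comm]; exact hC b)
      _ = 2 * C := by ring
  -- main claim: the image is constant on ordered pairs
  have main : ∀ m n : ℤ, m ≤ n → dist (c (l m)) (c (l n)) = 0 := by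
    intro m n hmn
    set δ := dist (c (l m)) (c (l n)) with hδ
    set L := n - m with hLdef
    have hL : (0 : ℤ) ≤ L := by omega
    -- recurrence of the segment in the positive direction with equal image length
    have key : ∀ N : ℤ, ∃ t : ℤ, N ≤ t ∧ dist (c (l t)) (c (l (t + L))) = δ := by
      intro N
      obtain ⟨t, ht, g, hg⟩ := (hbirec m n N).1
      refine ⟨t, ht, ?_⟩
      have h1 : l t = g • l m := by
        have := hg m le_rfl hmn
        simpa using this
      have h2 : l (t + L) = g • l n := by
        have := hg n hmn le_rfl
        simpa [hLdef] using this
      rw [h1, h2, hequiv, hequiv, (hisoY g).dist_eq]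
    -- build a sequence of disjoint copies
    let S : ℕ → ℤ := fun k => Nat.rec (Classical.choose (key 0))
      (fun _ ih => Classical.choose (key (ih + L))) k
    have hSstep : ∀ k : ℕ, S k + L ≤ S (k + 1) :=
      fun k => (Classical.choose_spec (key (S k + L))).1
    have hSdist : ∀ k : ℕ, dist (c (l (S k))) (c (l (S k + L))) = δ := by
      intro k
      cases k with
      | zero => exact (Classical.choose_spec (key 0)).2
      | succ k => exact (Classical.choose_spec (key (S k + L))).2
    have hSmono : ∀ k : ℕ, S 0 ≤ S k := by
      intro k
      induction k with
      | zero => exact le_rfl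
      | succ k ih => have := hSstep k; omega
    -- accumulate distance
    have acc : ∀ k : ℕ, ((k : ℝ) + 1) * δ ≤ dist (c (l (S 0))) (c (l (S k + L))) := by
      intro k
      induction k with
      | zero => simpa using (hSdist 0).ge
      | succ k ih =>
          have h1 : S 0 ≤ S k + L := le_trans (hSmono k) (by omega)
          have h2 : S k + L ≤ S (k + 1) := hSstep k
          have h3 : S (k + 1) ≤ S (k + 1) + L := by omega
          have e1 := hmono (S 0) (S k + L) (S (k + 1) + L) h1 (le_trans h2 h3)
          have e2 := hmono (S k + L) (S (k + 1)) (S (k + 1) + L) h2 h3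
          have hd := hSdist (k + 1)
          have hn : (0 : ℝ) ≤ dist (c (l (S k + L))) (c (l (S (k + 1)))) := dist_nonneg
          push_cast
          nlinarith [ih]
    have hδ0 : 0 ≤ δ := dist_nonneg
    by_contra hne
    have hδpos : 0 < δ := lt_of_le_of_ne hδ0 (Ne.symm hne)
    obtain ⟨k, hk⟩ := exists_nat_gt (2 * C / δ)
    have h1 := acc k
    have h2 := hdb (S 0) (S k + L)
    have : ((k : ℝ) + 1) * δ ≤ 2 * C := le_trans h1 h2
    have : (2 * C / δ) * δ < ((k : ℝ) + 1) * δ := by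
      apply mul_lt_mul_of_pos_right _ hδpos
      linarith
    rw [div_mul_cancel₀ _ (ne_of_gt hδpos)] at this
    linarith
  refine ⟨c (l 0), fun n => ?_⟩
  rcases le_total 0 n with h | h
  · have := main 0 n h
    rw [dist_comm] at this
    exact dist_eq_zero.mp this
  · exact dist_eq_zero.mp (main n 0 h)
end

section
/- Let Γ_H be a finite graph with an immersion i : Γ_H → R onto a rose R (so that i is locally injective on links), and let l : ℤ → R be a birecurrent bi-infinite edge path in R admitting a lift l_H : ℤ → Γ_H with i ∘ l_H = l. Then l_H is also birecurrent. -/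
set_option linter.unusedSectionVars false
set_option maxHeartbeats 1000000


/-- A bi-infinite path is birecurrent if every finite subpath occurs infinitely
often, as a subpath, in each of its two ends. -/
def Birecurrent {X : Type*} (p : ℤ → X) : Prop :=
  ∀ a b N : ℤ,
    (∃ t : ℤ, N ≤ t ∧ ∀ j : ℤ, a ≤ j → j ≤ b → p (t + (j - a)) = p j) ∧
    (∃ t : ℤ, t + (b - a) ≤ -N ∧ ∀ j : ℤ, a ≤ j → j ≤ b → p (t + (j - a)) = p j)



namespace BirecAux

variable {E V Eh : Type*}

section App
variable [Fintype Eh] [DecidableEq V] [DecidableEq E]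
variable (i : Eh → E) (ι τ : Eh → V) (l : ℤ → E)

/-- One step of the "read a letter" set dynamics. -/
def stepAt (m : ℤ) (A : Finset V) : Finset V :=
  (Finset.univ.filter (fun e : Eh => ι e ∈ A ∧ i e = l m)).image τ

/-- Read the word `l [x .. x+K)` starting from the vertex set `A`. -/
def app (x : ℤ) : ℕ → Finset V → Finset V
  | 0, A => A
  | K+1, A => stepAt i ι τ l (x + K) (app x K A)

theorem app_zero (x : ℤ) (A : Finset V) : app i ι τ l x 0 A = A := rfl

theorem app_succ (x : ℤ) (K : ℕ) (A : Finset V) :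
    app i ι τ l x (K+1) A = stepAt i ι τ l (x + K) (app i ι τ l x K A) := rfl

theorem stepAt_mono {A B : Finset V} (h : A ⊆ B) (m : ℤ) :
    stepAt i ι τ l m A ⊆ stepAt i ι τ l m B := by
  intro z hz
  simp only [stepAt, Finset.mem_image, Finset.mem_filter] at *
  obtain ⟨e, ⟨he1, he2, he3⟩, he4⟩ := hz
  exact ⟨e, ⟨he1, h he2, he3⟩, he4⟩

theorem app_mono {A B : Finset V} (h : A ⊆ B) (x : ℤ) (K : ℕ) :
    app i ι τ l x K A ⊆ app i ι τ l x K B := by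
  induction K with
  | zero => exact h
  | succ K ih => exact stepAt_mono i ι τ l ih _

theorem stepAt_congr {m m' : ℤ} (h : l m = l m') (A : Finset V) :
    stepAt i ι τ l m A = stepAt i ι τ l m' A := by
  unfold stepAt
  rw [h]

theorem app_words {x y : ℤ} {K : ℕ} (h : ∀ k : ℕ, k < K → l (x + k) = l (y + k))
    (A : Finset V) : app i ι τ l x K A = app i ι τ l y K A := by
  induction K with
  | zero => rfl
  | succ K ih =>
    rw [app_succ, app_succ, ih (fun k hk => h k (by omega)),
      stepAt_congr i ι τ l (h K (by omega))]

theorem app_add (x : ℤ) (K₁ K₂ : ℕ) (A : Finset V) :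
    app i ι τ l x (K₁ + K₂) A = app i ι τ l (x + K₁) K₂ (app i ι τ l x K₁ A) := by
  induction K₂ with
  | zero => rfl
  | succ K ih =>
    have h1 : K₁ + (K+1) = (K₁ + K) + 1 := rfl
    rw [h1, app_succ, app_succ, ih]
    congr 1
    push_cast
    ring

theorem mem_app_exists {x : ℤ} {K : ℕ} {A : Finset V} {z : V}
    (hz : z ∈ app i ι τ l x K A) : ∃ w ∈ A, z ∈ app i ι τ l x K {w} := by
  induction K generalizing z with
  | zero => exact ⟨z, hz, Finset.mem_singleton_self z⟩
  | succ K ih =>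
    rw [app_succ] at hz
    simp only [stepAt, Finset.mem_image, Finset.mem_filter] at hz
    obtain ⟨e, ⟨-, he2, he3⟩, he4⟩ := hz
    obtain ⟨w, hw, hw2⟩ := ih he2
    refine ⟨w, hw, ?_⟩
    rw [app_succ]
    simp only [stepAt, Finset.mem_image, Finset.mem_filter]
    exact ⟨e, ⟨Finset.mem_univ e, hw2, he3⟩, he4⟩

theorem stepAt_card (himm : ∀ e e' : Eh, ι e = ι e' → i e = i e' → e = e')
    {A : Finset V} (hA : A.card ≤ 1) (m : ℤ) : (stepAt i ι τ l m A).card ≤ 1 := by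
  rw [Finset.card_le_one]
  intro z1 h1 z2 h2
  simp only [stepAt, Finset.mem_image, Finset.mem_filter] at h1 h2
  obtain ⟨e1, ⟨-, hA1, hi1⟩, hz1⟩ := h1
  obtain ⟨e2, ⟨-, hA2, hi2⟩, hz2⟩ := h2
  have he : e1 = e2 := himm e1 e2 (Finset.card_le_one.mp hA _ hA1 _ hA2) (hi1.trans hi2.symm)
  rw [← hz1, ← hz2, he]

theorem app_card (himm : ∀ e e' : Eh, ι e = ι e' → i e = i e' → e = e')
    {A : Finset V} (hA : A.card ≤ 1) (x : ℤ) (K : ℕ) :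
    (app i ι τ l x K A).card ≤ 1 := by
  induction K with
  | zero => exact hA
  | succ K ih => exact stepAt_card i ι τ l himm ih _

theorem orbit_mem (lH : ℤ → Eh) (hpath : ∀ n : ℤ, τ (lH n) = ι (lH (n + 1)))
    (hlift : ∀ n : ℤ, i (lH n) = l n) (x : ℤ) (K : ℕ) :
    ι (lH (x + K)) ∈ app i ι τ l x K {ι (lH x)} := by
  induction K with
  | zero => simp [app_zero]
  | succ K ih =>
    rw [app_succ]
    have hx : x + ((K+1 : ℕ) : ℤ) = (x + K) + 1 := by push_cast; ring
    rw [hx, ← hpath (x + K)]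
    simp only [stepAt, Finset.mem_image, Finset.mem_filter]
    exact ⟨lH (x + K), ⟨Finset.mem_univ _, ih, hlift _⟩, rfl⟩

theorem orbit_singleton (himm : ∀ e e' : Eh, ι e = ι e' → i e = i e' → e = e')
    (lH : ℤ → Eh) (hpath : ∀ n : ℤ, τ (lH n) = ι (lH (n + 1)))
    (hlift : ∀ n : ℤ, i (lH n) = l n) (x : ℤ) (K : ℕ) :
    app i ι τ l x K {ι (lH x)} = {ι (lH (x + K))} := by
  have h1 := orbit_mem i ι τ l lH hpath hlift x K
  have h2 := app_card i ι τ l himm (by simp) x K (A := {ι (lH x)})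
  refine Finset.eq_singleton_iff_unique_mem.mpr ⟨h1, fun y hy => ?_⟩
  exact Finset.card_le_one.mp h2 y hy _ h1

theorem fwdZ (himm : ∀ e e' : Eh, ι e = ι e' → i e = i e' → e = e')
    (lH : ℤ → Eh) (hpath : ∀ n : ℤ, τ (lH n) = ι (lH (n + 1)))
    (hlift : ∀ n : ℤ, i (lH n) = l n)
    {x y K : ℤ} (h0 : lH x = lH y)
    (hl : ∀ k : ℤ, 1 ≤ k → k ≤ K → l (x + k) = l (y + k)) :
    ∀ k : ℤ, 0 ≤ k → k ≤ K → lH (x + k) = lH (y + k) := by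
  suffices h : ∀ n : ℕ, (n : ℤ) ≤ K → lH (x + n) = lH (y + n) by
    intro k hk1 hk2
    have h2 := h k.toNat (by rw [Int.toNat_of_nonneg hk1]; exact hk2)
    rwa [Int.toNat_of_nonneg hk1] at h2
  intro n
  induction n with
  | zero => intro _; simpa using h0
  | succ n ih =>
    intro hn
    have hprev : lH (x + n) = lH (y + n) := ih (by push_cast at hn ⊢; omega)
    have hx : x + ((n+1 : ℕ) : ℤ) = (x + n) + 1 := by push_cast; ring
    have hy : y + ((n+1 : ℕ) : ℤ) = (y + n) + 1 := by push_cast; ring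
    rw [hx, hy]
    refine himm _ _ ?_ ?_
    · rw [← hpath (x + n), ← hpath (y + n), hprev]
    · rw [hlift, hlift]
      have := hl ((n : ℤ) + 1) (by omega) (by push_cast at hn; omega)
      have ex : x + ((n : ℤ) + 1) = x + n + 1 := by ring
      have ey : y + ((n : ℤ) + 1) = y + n + 1 := by ring
      rwa [ex, ey] at this

end App

end BirecAux


open BirecAux in
/-- Let `Γ_H` be a finite graph (finitely many vertices `V` and
edges `Eh`, with initial/terminal vertex maps `ι`, `τ`) and `i : Γ_H → R` an
immersion onto a rose with edge set `E` (locally injective on links).  If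
`l_H : ℤ → Eh` is an edge path lifting the bi-infinite edge path `l = i ∘ l_H` of
`R`, and `l` is birecurrent, then `l_H` is birecurrent. -/
theorem lift_of_birecurrent_is_birecurrent {E V Eh : Type*} [Finite Eh] [Finite V]
    (i : Eh → E) (ι τ : Eh → V)
    (himm : ∀ e e' : Eh, ι e = ι e' → i e = i e' → e = e')
    (lH : ℤ → Eh) (hpath : ∀ n : ℤ, τ (lH n) = ι (lH (n + 1)))
    (l : ℤ → E) (hlift : ∀ n : ℤ, i (lH n) = l n)
    (hbir : Birecurrent l) :
    Birecurrent lH := by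
  letI : Fintype Eh := Fintype.ofFinite Eh
  letI : Fintype V := Fintype.ofFinite V
  letI : DecidableEq V := Classical.decEq V
  letI : DecidableEq E := Classical.decEq E
  intro a b N
  constructor
  ·
    by_cases hab : a ≤ b
    swap
    · exact ⟨N, le_refl N, fun j h1 h2 => (by omega : False).elim⟩
    -- a size-minimizing word image set
    obtain ⟨s₀, Δ, hSmin⟩ : ∃ s₀ : ℤ, ∃ Δ : ℕ, ∀ x : ℤ, ∀ K : ℕ,
        (app i ι τ l s₀ Δ Finset.univ).card ≤ (app i ι τ l x K Finset.univ).card := by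
      have hne : ({n | ∃ x : ℤ, ∃ K : ℕ, n = (app i ι τ l x K Finset.univ).card} : Set ℕ).Nonempty :=
        ⟨_, 0, 0, rfl⟩
      obtain ⟨x0, K0, hx0⟩ := Nat.sInf_mem hne
      exact ⟨x0, K0, fun x K => by rw [← hx0]; exact Nat.sInf_le ⟨x, K, rfl⟩⟩
    -- base port q₀ ≤ a
    obtain ⟨t0, ht01, ht02⟩ := (hbir s₀ (s₀ + Δ) (-a)).2
    have hq₀a : t0 + (Δ : ℤ) ≤ a := by omega
    set q₀ : ℤ := t0 + (Δ : ℤ) with hq₀def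
    have hq₀port : ∀ k : ℕ, k < Δ → l (s₀ + k) = l ((q₀ - Δ) + k) := by
      intro k hk
      have h := ht02 (s₀ + k) (by omega) (by omega)
      have e1 : t0 + (s₀ + (k : ℤ) - s₀) = (q₀ - Δ) + k := by rw [hq₀def]; ring
      rw [e1] at h
      exact h.symm
    have hbq : q₀ ≤ b := le_trans hq₀a hab
    -- far-right copies of ever longer initial windows
    have ex_step : ∀ p : ℤ, ∃ x : ℤ, max N (p+1) ≤ x ∧
        ∀ k : ℤ, -(Δ : ℤ) ≤ k → k ≤ (p - q₀) + (b - q₀) + Δ + 1 → l (x + k) = l (q₀ + k) := by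
      intro p
      obtain ⟨t, ht1, ht2⟩ := (hbir (q₀ - Δ) (p + (b - q₀) + Δ + 1) (max N (p+1))).1
      refine ⟨t + Δ, by omega, fun k hk1 hk2 => ?_⟩
      have h := ht2 (q₀ + k) (by omega) (by omega)
      have e1 : t + (q₀ + k - (q₀ - Δ)) = (t + Δ) + k := by ring
      rwa [e1] at h
    obtain ⟨step, hstep⟩ := Classical.axiomOfChoice ex_step
    obtain ⟨π, hπ0, hπS⟩ : ∃ π : ℕ → ℤ, π 0 = q₀ ∧ ∀ n, π (n+1) = step (π n) + (π n - q₀) :=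
      ⟨fun n => Nat.rec q₀ (fun _ prev => step prev + (prev - q₀)) n, rfl, fun n => rfl⟩
    have hq₀le : ∀ n, q₀ ≤ π n := by
      intro n
      induction n with
      | zero => rw [hπ0]
      | succ n ih =>
        have h1 : π n + 1 ≤ step (π n) := le_trans (le_max_right _ _) (hstep (π n)).1
        rw [hπS]
        omega
    have hmono : ∀ m n : ℕ, m ≤ n → π m ≤ π n := by
      intro m n h
      induction n, h using Nat.le_induction with
      | base => exact le_refl _
      | succ n hn ih =>
        refine le_trans ih ?_
        have h1 : π n + 1 ≤ step (π n) := le_trans (le_max_right _ _) (hstep (π n)).1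
        have h2 := hq₀le n
        rw [hπS]
        omega
    have hstepN : ∀ n, N ≤ step (π n) := fun n => le_trans (le_max_left _ _) (hstep (π n)).1
    -- the key matching invariant
    have hQ : ∀ i' j' : ℕ, i' < j' → ∀ k : ℤ, -(Δ : ℤ) ≤ k →
        k ≤ (π i' - q₀) + (b - q₀) + Δ + 1 →
        l ((π j' - π i' + q₀) + k) = l (q₀ + k) := by
      intro i' j' hij
      induction j', hij using Nat.le_induction with
      | base =>
        intro k hk1 hk2
        have h := (hstep (π i')).2 k hk1 hk2
        have e1 : π (i'+1) - π i' + q₀ + k = step (π i') + k := by rw [hπS]; ring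
        rwa [e1]
      | succ j' hj' ih =>
        intro k hk1 hk2
        have hmj : π i' ≤ π j' := hmono i' j' (by omega)
        have h := (hstep (π j')).2 ((π j' - π i') + k) (by omega) (by omega)
        have e1 : π (j'+1) - π i' + q₀ + k = step (π j') + ((π j' - π i') + k) := by
          rw [hπS]; ring
        have e2 : q₀ + ((π j' - π i') + k) = (π j' - π i' + q₀) + k := by ring
        rw [e1, h, e2]
        exact ih k hk1 hk2
    -- every π n is a port
    have hπport : ∀ n : ℕ, ∀ k : ℕ, k < Δ → l (s₀ + k) = l ((π n - Δ) + k) := by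
      intro n k hk
      match n with
      | 0 => rw [hπ0]; exact hq₀port k hk
      | n+1 =>
        have hq0' : π 0 = q₀ := hπ0
        have h := hQ 0 (n+1) (by omega) ((k : ℤ) - Δ) (by omega) (by omega)
        rw [hq0'] at h
        have e1 : π (n+1) - q₀ + q₀ + ((k : ℤ) - Δ) = (π (n+1) - Δ) + k := by ring
        have e2 : q₀ + ((k : ℤ) - Δ) = (q₀ - Δ) + k := by ring
        rw [e1, e2] at h
        exact (hq₀port k hk).trans h.symm
    set Sstar := app i ι τ l s₀ Δ Finset.univ with hSstar
    have hportS : ∀ x : ℤ, (∀ k : ℕ, k < Δ → l (s₀ + k) = l ((x - Δ) + k)) →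
        app i ι τ l (x - Δ) Δ Finset.univ = Sstar := by
      intro x hx
      rw [hSstar]
      exact app_words i ι τ l (fun k hk => (hx k hk).symm) Finset.univ
    have hmemS : ∀ x : ℤ, (∀ k : ℕ, k < Δ → l (s₀ + k) = l ((x - Δ) + k)) →
        ι (lH x) ∈ Sstar := by
      intro x hx
      rw [← hportS x hx]
      have h1 := orbit_mem i ι τ l lH hpath hlift (x - Δ) Δ
      have e1 : x - (Δ : ℤ) + (Δ : ℤ) = x := by ring
      rw [e1] at h1
      exact app_mono i ι τ l (Finset.subset_univ _) _ _ h1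
    -- pigeonhole
    obtain ⟨i', j', hij, hcol⟩ : ∃ i' j' : ℕ, i' < j' ∧ ι (lH (π j')) = ι (lH (π i')) := by
      obtain ⟨x, y, hxy, hfeq⟩ := Fintype.exists_ne_map_eq_of_card_lt
        (fun n : Fin (Fintype.card V + 1) => ι (lH (π n))) (by simpa using Nat.lt_succ_self _)
      rcases lt_trichotomy (x : ℕ) (y : ℕ) with h|h|h
      · exact ⟨x, y, h, hfeq.symm⟩
      · exact absurd (Fin.ext h) hxy
      · exact ⟨y, x, h, hfeq⟩
    -- the candidate position
    have hq₀i : q₀ ≤ π i' := hq₀le i'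
    set X : ℤ := π j' - π i' + q₀ with hXdef
    set D : ℕ := (π i' - q₀).toNat with hDdef
    have hDcast : (D : ℤ) = π i' - q₀ := Int.toNat_of_nonneg (by omega)
    have hXport : ∀ k : ℕ, k < Δ → l (s₀ + k) = l ((X - Δ) + k) := by
      intro k hk
      have h := hQ i' j' hij ((k : ℤ) - Δ) (by omega) (by omega)
      have e1 : (π j' - π i' + q₀) + ((k : ℤ) - Δ) = (X - Δ) + k := by rw [hXdef]; ring
      have e2 : q₀ + ((k : ℤ) - Δ) = (q₀ - Δ) + k := by ring
      rw [e1, e2] at h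
      exact (hq₀port k hk).trans h.symm
    -- transport: reading the word l[q₀..π i') maps Sstar onto Sstar
    have htrans : app i ι τ l q₀ D Sstar = Sstar := by
      have hTq : app i ι τ l (q₀ - Δ) Δ Finset.univ = Sstar := hportS q₀ hq₀port
      have hTp : app i ι τ l (π i' - Δ) Δ Finset.univ = Sstar := hportS (π i') (hπport i')
      have h1 : app i ι τ l (q₀ - Δ) (Δ + D) Finset.univ = app i ι τ l q₀ D Sstar := by
        rw [app_add]
        have e : q₀ - (Δ : ℤ) + (Δ : ℕ) = q₀ := by push_cast; ring
        rw [e, hTq]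
      have h2 : app i ι τ l (q₀ - Δ) (D + Δ) Finset.univ ⊆ Sstar := by
        rw [app_add]
        have e : q₀ - (Δ : ℤ) + (D : ℕ) = π i' - Δ := by rw [hDcast]; push_cast; ring
        rw [e, ← hTp]
        exact app_mono i ι τ l (Finset.subset_univ _) _ _
      have h3 : Sstar.card ≤ (app i ι τ l q₀ D Sstar).card := by
        rw [← h1]
        exact hSmin (q₀ - Δ) (Δ + D)
      have h4 : app i ι τ l q₀ D Sstar ⊆ Sstar := by
        rw [← h1, Nat.add_comm]
        exact h2
      exact Finset.eq_of_subset_of_card_le h4 h3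
    -- the two singleton transports agree
    have hsing1 : app i ι τ l X D {ι (lH X)} = {ι (lH (π j'))} := by
      have h := orbit_singleton i ι τ l himm lH hpath hlift X D
      have e : X + (D : ℤ) = π j' := by rw [hDcast, hXdef]; ring
      rwa [e] at h
    have hsing2 : app i ι τ l q₀ D {ι (lH q₀)} = {ι (lH (π i'))} := by
      have h := orbit_singleton i ι τ l himm lH hpath hlift q₀ D
      have e : q₀ + (D : ℤ) = π i' := by rw [hDcast]; ring
      rwa [e] at h
    have hwords : app i ι τ l X D {ι (lH X)} = app i ι τ l q₀ D {ι (lH X)} := by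
      refine app_words i ι τ l (fun k hk => ?_) _
      have hkD : (k : ℤ) < (D : ℤ) := by exact_mod_cast hk
      have h := hQ i' j' hij k (by omega) (by omega)
      have e1 : (π j' - π i' + q₀) + (k : ℤ) = X + k := by rw [hXdef]
      rwa [e1] at h
    have hkey : app i ι τ l q₀ D {ι (lH X)} = app i ι τ l q₀ D {ι (lH q₀)} := by
      rw [← hwords, hsing1, hsing2, hcol]
    have hXS : ι (lH X) ∈ Sstar := hmemS X hXport
    have hq₀S : ι (lH q₀) ∈ Sstar := hmemS q₀ hq₀port
    -- cancellation
    have hvXq : ι (lH X) = ι (lH q₀) := by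
      by_contra hne
      have hsub : Sstar ⊆ (Sstar.erase (ι (lH q₀))).biUnion
          (fun w => app i ι τ l q₀ D {w}) := by
        intro z hz
        rw [← htrans] at hz
        obtain ⟨w, hw, hzw⟩ := mem_app_exists i ι τ l hz
        rcases eq_or_ne w (ι (lH q₀)) with h|h
        · subst h
          refine Finset.mem_biUnion.mpr ⟨ι (lH X), Finset.mem_erase.mpr ⟨hne, hXS⟩, ?_⟩
          rw [hkey]
          exact hzw
        · exact Finset.mem_biUnion.mpr ⟨w, Finset.mem_erase.mpr ⟨h, hw⟩, hzw⟩
      have hc1 := Finset.card_le_card hsub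
      have hc2 := Finset.card_biUnion_le (s := Sstar.erase (ι (lH q₀)))
        (t := fun w => app i ι τ l q₀ D {w})
      have hc3 : ∑ w ∈ Sstar.erase (ι (lH q₀)), (app i ι τ l q₀ D {w}).card ≤
          ∑ w ∈ Sstar.erase (ι (lH q₀)), 1 :=
        Finset.sum_le_sum (fun w _ => app_card i ι τ l himm (by simp) q₀ D)
      have hc4 : (Sstar.erase (ι (lH q₀))).card = Sstar.card - 1 :=
        Finset.card_erase_of_mem hq₀S
      have hc5 : 0 < Sstar.card := Finset.card_pos.mpr ⟨_, hq₀S⟩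
      rw [← Finset.card_eq_sum_ones] at hc3
      omega
    -- conclude
    have hlXq : lH X = lH q₀ := by
      refine himm _ _ hvXq ?_
      rw [hlift, hlift]
      have h := hQ i' j' hij 0 (by omega) (by omega)
      have e1 : (π j' - π i' + q₀) + (0 : ℤ) = X := by rw [hXdef]; ring
      have e2 : q₀ + (0 : ℤ) = q₀ := by ring
      rwa [e1, e2] at h
    have hmatch : ∀ k : ℤ, 0 ≤ k → k ≤ b - q₀ → lH (X + k) = lH (q₀ + k) := by
      refine fwdZ i ι τ l himm lH hpath hlift hlXq (fun k hk1 hk2 => ?_)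
      have h := hQ i' j' hij k (by omega) (by omega)
      have e1 : (π j' - π i' + q₀) + k = X + k := by rw [hXdef]
      rwa [e1] at h
    refine ⟨X + (a - q₀), ?_, ?_⟩
    · obtain ⟨jj, rfl⟩ : ∃ jj, j' = jj + 1 := ⟨j' - 1, by omega⟩
      have h1 : N ≤ step (π jj) := hstepN jj
      have h2 : π i' ≤ π jj := hmono i' jj (by omega)
      have h3 := hπS jj
      have hX' : X = π (jj+1) - π i' + q₀ := hXdef
      omega
    · intro j'' h1 h2
      have e : X + (a - q₀) + (j'' - a) = X + (j'' - q₀) := by ring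
      rw [e]
      have h := hmatch (j'' - q₀) (by omega) (by omega)
      have e2 : q₀ + (j'' - q₀) = j'' := by ring
      rwa [e2] at h

  ·
    by_cases hab : a ≤ b
    swap
    · exact ⟨-N - (b - a), by omega, fun j h1 h2 => (by omega : False).elim⟩
    have ex_step : ∀ p : ℤ, ∃ x : ℤ, x + (b - p) ≤ -(max N (1 - b)) ∧
        ∀ k : ℤ, 0 ≤ k → k ≤ b - p → l (x + k) = l (p + k) := by
      intro p
      obtain ⟨t, ht1, ht2⟩ := (hbir p b (max N (1 - b))).2
      refine ⟨t, ht1, fun k hk1 hk2 => ?_⟩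
      have h := ht2 (p + k) (by omega) (by omega)
      have e1 : t + (p + k - p) = t + k := by ring
      rwa [e1] at h
    obtain ⟨step, hstep⟩ := Classical.axiomOfChoice ex_step
    obtain ⟨p, hp0, hpS⟩ : ∃ p : ℕ → ℤ, p 0 = a ∧ ∀ n, p (n+1) = step (p n) :=
      ⟨fun n => Nat.rec a (fun _ prev => step prev) n, rfl, fun n => rfl⟩
    have hdec : ∀ n, p (n+1) ≤ p n - 1 := by
      intro n
      have h := (hstep (p n)).1
      have h2 : (1 - b) ≤ max N (1 - b) := le_max_right _ _
      rw [hpS]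
      omega
    have hmono : ∀ m n : ℕ, m ≤ n → p n ≤ p m := by
      intro m n h
      induction n, h using Nat.le_induction with
      | base => exact le_refl _
      | succ n hn ih => exact le_trans (by have := hdec n; omega) ih
    have hple : ∀ n, p n ≤ a := by
      intro n
      have := hmono 0 n (by omega)
      omega
    have hQ : ∀ i' j' : ℕ, i' ≤ j' → ∀ k : ℤ, 0 ≤ k → k ≤ b - p i' →
        l (p j' + k) = l (p i' + k) := by
      intro i' j' hij
      induction j', hij using Nat.le_induction with
      | base => intro k _ _; rfl
      | succ j' hj' ih =>
        intro k hk1 hk2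
        have h1 : p j' ≤ p i' := hmono i' j' hj'
        have h := (hstep (p j')).2 k hk1 (by omega)
        rw [hpS j', h]
        exact ih k hk1 hk2
    obtain ⟨i', j', hij, hcol⟩ : ∃ i' j' : ℕ, i' < j' ∧ ι (lH (p j')) = ι (lH (p i')) := by
      obtain ⟨x, y, hxy, hfeq⟩ := Fintype.exists_ne_map_eq_of_card_lt
        (fun n : Fin (Fintype.card V + 1) => ι (lH (p n))) (by simpa using Nat.lt_succ_self _)
      rcases lt_trichotomy (x : ℕ) (y : ℕ) with h|h|h
      · exact ⟨x, y, h, hfeq.symm⟩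
      · exact absurd (Fin.ext h) hxy
      · exact ⟨y, x, h, hfeq⟩
    have hpia : p i' ≤ a := hple i'
    have h0 : lH (p j') = lH (p i') := by
      refine himm _ _ hcol ?_
      rw [hlift, hlift]
      have := hQ i' j' (by omega) 0 (by omega) (by omega)
      simpa using this
    have hmatch := fwdZ i ι τ l himm lH hpath hlift h0
      (fun k hk1 hk2 => hQ i' j' (by omega) k (by omega) hk2)
    refine ⟨p j' + (a - p i'), ?_, ?_⟩
    · obtain ⟨jj, rfl⟩ : ∃ jj, j' = jj + 1 := ⟨j' - 1, by omega⟩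
      have h1 := (hstep (p jj)).1
      have h2 : p jj ≤ p i' := hmono i' jj (by omega)
      have h3 : N ≤ max N (1 - b) := le_max_left _ _
      have h4 := hpS jj
      omega
    · intro j'' h1 h2
      have e : p j' + (a - p i') + (j'' - a) = p j' + (j'' - p i') := by ring
      rw [e]
      have h := hmatch (j'' - p i') (by omega) (by omega)
      have e2 : p i' + (j'' - p i') = j'' := by ring
      rwa [e2] at h
end

section
/- Let F be a free group and T the Bass–Serre tree of the HNN extension F = ⟨a⟩*_φ with stable letter b acting over the vertex group ⟨a⟩ in F₂ = ⟨a,b⟩ (edge length 3, trivially stabilized edges). Let T_k be the simplicial F₂-tree dual to the splitting F₂ = ⟨a^k b⟩ * ⟨a⟩ with loop length 1 and edge length 1 as described. Then for the conjugacy classes g_k = a^k b one has ℓ_{T_k}(g_k) = 1 while ℓ_{T_k}(g_{k+1}) = 3 for all k; consequently there is no continuous pairing ⟨·,·⟩ on pairs (tree, relative current) extending ⟨T, η_g⟩ = ℓ_T(g) that is continuous in both variables simultaneously along the sequences T_k → T and η_{g_k} → η_∞. -/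
namespace Stmt17

/-- The free group `F₂ = ⟨a, b⟩`. -/
abbrev F2 := FreeGroup Bool

/-- The generator `a`. -/
def a : F2 := FreeGroup.of false

/-- The generator `b`. -/
def b : F2 := FreeGroup.of true

/-- The peripheral subgroup `⟨a⟩`. -/
def A : Subgroup F2 := Subgroup.zpowers a

/-- `c k = a^k * b`, the label of the loop of the graph of groups defining `T_k`. -/
def c (k : ℕ) : F2 := a ^ k * b

lemma c_ne_one (k : ℕ) : c k ≠ 1 := by
  intro h
  have h2 := congrArg (FreeGroup.lift (fun t : Bool => if t then Multiplicative.ofAdd (1 : ℤ) else 1)) h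
  simp [c, a, b] at h2

/-- Vertices of the Bass–Serre tree `T_k`: the orbit `F₂` of the loop vertex
(trivial stabilizer) and the orbit `F₂/⟨a⟩` of the vertex with stabilizer `⟨a⟩`. -/
abbrev V := F2 ⊕ (F2 ⧸ A)

instance : SMul F2 V :=
  ⟨fun g v => match v with
    | Sum.inl h => Sum.inl (g * h)
    | Sum.inr q => Sum.inr (g • q)⟩

instance : MulAction F2 V where
  one_smul v := by
    cases v with
    | inl h => show Sum.inl ((1 : F2) * h) = Sum.inl h; rw [one_mul]
    | inr q => show Sum.inr ((1 : F2) • q) = Sum.inr q; rw [one_smul]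
  mul_smul g h v := by
    cases v with
    | inl x => show Sum.inl (g * h * x) = Sum.inl (g * (h * x)); rw [mul_assoc]
    | inr q => show Sum.inr ((g * h) • q) = Sum.inr (g • h • q); rw [mul_smul]

/-- The Bass–Serre tree `T_k` of the splitting `F₂ = ⟨a⟩ * ⟨a^k b⟩`, realized as the
graph of groups with two vertices joined by an edge (of length 1), vertex group
`⟨a⟩` at one vertex and a loop (of length 1) labeled `a^k b` at the other:
`Sum.inl g` is joined to `Sum.inl (g * c k)` (lifts of the loop) and `Sum.inl g` is
joined to `Sum.inr ⟦g⟧` (lifts of the edge). -/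
def Tk (k : ℕ) : SimpleGraph V where
  Adj x y :=
    match x, y with
    | Sum.inl g, Sum.inl h => g⁻¹ * h = c k ∨ h⁻¹ * g = c k
    | Sum.inl g, Sum.inr q => (QuotientGroup.mk g : F2 ⧸ A) = q
    | Sum.inr q, Sum.inl g => (QuotientGroup.mk g : F2 ⧸ A) = q
    | Sum.inr _, Sum.inr _ => False
  symm := by
    constructor
    intro x y hxy
    cases x <;> cases y <;> simp_all <;> tauto
  loopless := by
    constructor
    intro x hx
    cases x with
    | inl g =>
        rcases hx with h | h <;>
        · simp only [inv_mul_cancel] at h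
          exact c_ne_one k h.symm
    | inr q => exact hx

/-- The translation length of `g` on the simplicial tree `T_k`, with all edges of
length 1, computed via the graph metric. -/
noncomputable def transLen (k : ℕ) (g : F2) : ℕ :=
  ⨅ v : V, (Tk k).dist v (g • v)

/-! Colouring each vertex of `T_k` by the parity of its `b`-exponent (flipped on the
`⟨a⟩`-vertices) is a proper 2-colouring, and an element of odd `b`-exponent swaps the two
colours; so both `c k` and `a * c k` move every vertex an odd distance. `c k` moves the base
vertex along a lift of the loop. `a * c k` has the `b`-exponent of `c k` but a different
`a`-exponent, so it is conjugate neither to `c k` nor to its inverse and moves no vertex to a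
neighbour; its displacement is therefore at least `3`, which is attained at the base vertex. -/

open SimpleGraph FreeGroup

def _root_.FreeGroup.expSum {α : Type*} [DecidableEq α] (t : α) (x : FreeGroup α) : ℤ :=
  (lift fun s => Multiplicative.ofAdd (if s = t then (1 : ℤ) else 0)) x |>.toAdd

section expSum

variable {α : Type*} [DecidableEq α] (t : α)

@[simp] lemma _root_.FreeGroup.expSum_of (s : α) : expSum t (of s) = if s = t then 1 else 0 := by
  simp [expSum]

@[simp] lemma _root_.FreeGroup.expSum_mul (x y : FreeGroup α) :
    expSum t (x * y) = expSum t x + expSum t y := by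
  simp [expSum]

@[simp] lemma _root_.FreeGroup.expSum_inv (x : FreeGroup α) : expSum t x⁻¹ = -expSum t x := by
  simp [expSum]

@[simp] lemma _root_.FreeGroup.expSum_pow (x : FreeGroup α) (n : ℕ) :
    expSum t (x ^ n) = n * expSum t x := by
  simp [expSum]

@[simp] lemma _root_.FreeGroup.expSum_zpow (x : FreeGroup α) (n : ℤ) :
    expSum t (x ^ n) = n * expSum t x := by
  simp [expSum]

end expSum

lemma expSum_true_eq_of_mk_eq {x y : F2} (h : (x : F2 ⧸ A) = y) :
    expSum true x = expSum true y := by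
  obtain ⟨n, hn⟩ := Subgroup.mem_zpowers_iff.1 (QuotientGroup.eq.1 h)
  have := congrArg (expSum true) hn
  simp [a] at this
  omega

@[simp] lemma smul_inl (g h : F2) : g • (Sum.inl h : V) = Sum.inl (g * h) := rfl

@[simp] lemma smul_inr (g : F2) (q : F2 ⧸ A) : g • (Sum.inr q : V) = Sum.inr (g • q) := rfl

lemma Tk_adj_smul {k : ℕ} (g : F2) {v w : V} (h : (Tk k).Adj v w) :
    (Tk k).Adj (g • v) (g • w) :=
  match v, w, h with
  | Sum.inl x, Sum.inl y, Or.inl h => Or.inl (by rw [← h]; group)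
  | Sum.inl x, Sum.inl y, Or.inr h => Or.inr (by rw [← h]; group)
  | Sum.inl x, Sum.inr q, h => (MulAction.Quotient.smul_mk A g x).symm.trans (congrArg (g • ·) h)
  | Sum.inr q, Sum.inl y, h => (MulAction.Quotient.smul_mk A g y).symm.trans (congrArg (g • ·) h)

def smulHom (k : ℕ) (g : F2) : Tk k →g Tk k := ⟨(g • ·), Tk_adj_smul g⟩

@[simp] lemma smulHom_apply (k : ℕ) (g : F2) (v : V) : smulHom k g v = g • v := rfl

lemma adj_inl_mk (k : ℕ) (x : F2) : (Tk k).Adj (Sum.inl x) (Sum.inr x) := rfl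

lemma adj_inl_mul_c (k : ℕ) (x : F2) : (Tk k).Adj (Sum.inl x) (Sum.inl (x * c k)) :=
  Or.inl (by group)

lemma adj_inr_one_inl_a (k : ℕ) : (Tk k).Adj (Sum.inr ((1 : F2) : F2 ⧸ A)) (Sum.inl a) :=
  QuotientGroup.eq.2 (Subgroup.mem_zpowers_iff.2 ⟨-1, by simp⟩)

lemma Tk_connected (k : ℕ) : (Tk k).Connected := by
  let S : Subgroup F2 :=
    { carrier := {g | (Tk k).Reachable (Sum.inl 1) (Sum.inl g)}
      one_mem' := Reachable.refl _
      mul_mem' := fun {x y} hx hy => hx.trans (by simpa using hy.map (smulHom k x))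
      inv_mem' := fun {x} hx => by simpa using (hx.map (smulHom k x⁻¹)).symm }
  have ha : a ∈ S := (adj_inl_mk k 1).reachable.trans (adj_inr_one_inl_a k).reachable
  have hc : c k ∈ S := (one_mul (c k)) ▸ (adj_inl_mul_c k 1).reachable
  have hb : b ∈ S := by
    simpa [c] using S.mul_mem (S.inv_mem (S.pow_mem ha k)) hc
  have hS : ∀ g, g ∈ S := by
    rw [← Subgroup.eq_top_iff', eq_top_iff, ← FreeGroup.closure_range_of, Subgroup.closure_le]
    rintro _ ⟨t, rfl⟩
    cases t
    exacts [ha, hb]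
  have hreach : ∀ v : V, (Tk k).Reachable (Sum.inl 1) v
    | Sum.inl g => hS g
    | Sum.inr q => (hS q.out).trans (QuotientGroup.out_eq' q ▸ adj_inl_mk k q.out).reachable
  exact ⟨fun v w => (hreach v).symm.trans (hreach w)⟩

lemma expSum_true_out {g : F2} {q : F2 ⧸ A} (h : (g : F2 ⧸ A) = q) :
    expSum true q.out = expSum true g :=
  expSum_true_eq_of_mk_eq ((QuotientGroup.out_eq' q).trans h.symm)

noncomputable def parity : V → Bool
  | Sum.inl g => decide (Even (expSum true g))
  | Sum.inr q => !decide (Even (expSum true q.out))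

lemma parity_ne_of_adj {k : ℕ} {v w : V} (h : (Tk k).Adj v w) : parity v ≠ parity w := by
  match v, w, h with
  | Sum.inl x, Sum.inl y, Or.inl h =>
    have := congrArg (expSum true) h
    simp [c, a, b] at this
    simp [parity, show expSum true y = expSum true x + 1 by omega, ← Int.not_even_iff_odd]
  | Sum.inl x, Sum.inl y, Or.inr h =>
    have := congrArg (expSum true) h
    simp [c, a, b] at this
    simp [parity, show expSum true x = expSum true y + 1 by omega, ← Int.not_even_iff_odd]
  | Sum.inl x, Sum.inr q, h => simp [parity, expSum_true_out h]
  | Sum.inr q, Sum.inl y, h => simp [parity, expSum_true_out h]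

lemma parity_smul {g : F2} (hg : Odd (expSum true g)) (v : V) : parity (g • v) = !parity v := by
  have hg' : ¬Even (expSum true g) := Int.not_even_iff_odd.2 hg
  cases v with
  | inl x => simp [parity, Int.even_add, hg', -Int.not_even_iff_odd]
  | inr q =>
    have : expSum true (g • q).out = expSum true g + expSum true q.out := by
      rw [← expSum_mul, expSum_true_out]
      rw [← smul_eq_mul, ← MulAction.Quotient.smul_mk, QuotientGroup.out_eq']
    simp [parity, Int.even_add, hg', this, -Int.not_even_iff_odd]

lemma odd_dist_smul {k : ℕ} {g : F2} (hg : Odd (expSum true g)) (v : V) :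
    Odd ((Tk k).dist v (g • v)) := by
  obtain ⟨p, hp⟩ := (Tk_connected k).exists_walk_length_eq_dist v (g • v)
  rw [← hp, (Coloring.mk parity parity_ne_of_adj).odd_length_iff_not_congr]
  change ¬parity v = true ↔ parity (g • v) = true
  simp [parity_smul hg]

lemma not_adj_smul_self {k : ℕ} {g : F2} (hb : expSum true g ≠ -1) (ha : expSum false g ≠ k)
    (v : V) : ¬(Tk k).Adj v (g • v) := by
  match v with
  | Sum.inl x =>
    rintro (h | h)
    · have := congrArg (expSum false) h
      simp [c, a, b] at this
      omega
    · have := congrArg (expSum true) h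
      simp [c, a, b] at this
      omega
  | Sum.inr _ => exact id

lemma dist_inl_one_smul_le_three (k : ℕ) :
    (Tk k).dist (Sum.inl 1) ((a * c k) • Sum.inl 1) ≤ 3 := by
  have hloop : (Tk k).Adj (Sum.inl a) ((a * c k) • Sum.inl 1) := by
    simpa using adj_inl_mul_c k a
  exact dist_le (.cons (adj_inl_mk k 1) (.cons (adj_inr_one_inl_a k) hloop.toWalk))

lemma transLen_eq_of_le {k n : ℕ} {g : F2} (v₀ : V) (h₀ : (Tk k).dist v₀ (g • v₀) ≤ n)
    (h : ∀ v, n ≤ (Tk k).dist v (g • v)) : transLen k g = n :=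
  le_antisymm ((ciInf_le (OrderBot.bddBelow _) v₀).trans h₀) (le_ciInf h)

/-- In the tree `T_k` dual to the splitting
`F₂ = ⟨a⟩ * ⟨a^k b⟩` (unit edge lengths), the conjugacy class `g_k = a^k b` has
translation length `ℓ_{T_k}(g_k) = 1`, while `ℓ_{T_k}(g_{k+1}) = ℓ_{T_k}(a^{k+1} b) = 3`.
Consequently the naive length pairing `⟨T, η_g⟩ = ℓ_T(g)` admits no extension
continuous in both variables along `T_k → T`, `η_{g_k} → η_∞`. -/
theorem translation_length_discontinuity (k : ℕ) :
    transLen k (c k) = 1 ∧ transLen k (a * c k) = 3 := by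
  have hb : expSum true (c k) = 1 := by simp [c, a, b]
  have hab : expSum true (a * c k) = 1 := by simp [c, a, b]
  constructor
  · refine transLen_eq_of_le (Sum.inl 1) ?_ fun v => (odd_dist_smul (hb ▸ odd_one) v).pos
    exact (dist_eq_one_iff_adj.2 (by simpa using adj_inl_mul_c k 1)).le
  · refine transLen_eq_of_le (Sum.inl 1) (dist_inl_one_smul_le_three k) fun v => ?_
    have hodd := odd_dist_smul (k := k) (hab ▸ odd_one) v
    have hne : (Tk k).dist v ((a * c k) • v) ≠ 1 := fun h =>
      not_adj_smul_self (by omega) (by simp [c, a, b]) v (dist_eq_one_iff_adj.1 h)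
    obtain ⟨m, hm⟩ := hodd
    omega

end Stmt17
end
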